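/- For integers x, y and n ≥ 0, the Gaussian binomial coefficients satisfy the q-Vandermonde identity: sum over k from 0 to n of v^{x·k − y·(n−k)} · [x choose n−k] · [y choose k] = [x+y choose n]. -/

import Mathlib

/-!
Both sides, as functions of `(x, n) ∈ ℤ × ℕ`, satisfy the recursion coming from the q-Pascal rule
`[m + 1, r] = v^r [m, r] + v^(r - m - 1) [m, r - 1]`, namely
`F (x + 1) (n + 1) = v^(n + 1) F x (n + 1) + v^(n - x - y) F x n`, and they agree for `n = 0` and
for `x = 0` (where only the term `k = n` of the sum survives, as `[0, r] = 0` for `r > 0`).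
Since `v^(n + 1)` is invertible, such a recursion propagates the values from `x = 0` both upwards
and downwards in `x`, by induction on `n`.
-/

noncomputable section

/-- The indeterminate `v`. -/
def v : RatFunc ℚ := RatFunc.X

/-- Quantum integer `[r] = (v^r - v^{-r})/(v - v⁻¹)`. -/
def qint (r : ℤ) : RatFunc ℚ := (v ^ r - v ^ (-r)) / (v - v⁻¹)

/-- Quantum factorial `[n]!`. -/
def qfact (n : ℕ) : RatFunc ℚ := ∏ i ∈ Finset.range n, qint ((i : ℤ) + 1)

/-- Gaussian binomial coefficient `[m choose r]`, zero for `r < 0`. -/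
def qbinom (m r : ℤ) : RatFunc ℚ :=
  if r < 0 then 0
  else (∏ i ∈ Finset.range r.toNat, qint (m - (i : ℤ))) / qfact r.toNat

lemma v_ne_zero : v ≠ 0 := RatFunc.X_ne_zero

lemma v_pow_ne_one {k : ℕ} (hk : k ≠ 0) : v ^ k ≠ 1 := by
  intro h
  have hX : (Polynomial.X : Polynomial ℚ) ^ k = 1 := by
    apply RatFunc.algebraMap_injective ℚ
    simpa [RatFunc.algebraMap_X, v] using h
  simpa [hk] using congrArg Polynomial.natDegree hX

lemma v_zpow_ne_one {k : ℤ} (hk : k ≠ 0) : v ^ k ≠ 1 := by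
  rcases Int.natAbs_eq k with h | h <;> rw [h] <;>
    simp only [zpow_natCast, zpow_neg, ne_eq, inv_eq_one] <;>
    exact v_pow_ne_one (Int.natAbs_ne_zero.mpr hk)

lemma v_zpow_sub_zpow_neg_ne_zero {r : ℤ} (hr : r ≠ 0) : v ^ r - v ^ (-r) ≠ 0 := by
  rw [sub_ne_zero, ne_eq, ← mul_inv_eq_one₀ (zpow_ne_zero _ v_ne_zero), ← zpow_neg, neg_neg,
    ← zpow_add₀ v_ne_zero]
  exact v_zpow_ne_one (by omega)

lemma qint_ne_zero {r : ℤ} (hr : r ≠ 0) : qint r ≠ 0 :=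
  div_ne_zero (v_zpow_sub_zpow_neg_ne_zero hr) (by simpa using v_zpow_sub_zpow_neg_ne_zero one_ne_zero)

lemma qfact_ne_zero (n : ℕ) : qfact n ≠ 0 :=
  Finset.prod_ne_zero_iff.mpr fun i _ ↦ qint_ne_zero (by omega)

lemma qint_eq_add (m r : ℤ) : qint m = v ^ r * qint (m - r) + v ^ (r - m) * qint r := by
  simp only [qint, zpow_sub₀ v_ne_zero, zpow_neg, neg_sub]
  have := v_ne_zero
  have := zpow_ne_zero r v_ne_zero
  have := zpow_ne_zero m v_ne_zero
  field_simp
  ring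

lemma qbinom_of_neg (m : ℤ) {r : ℤ} (hr : r < 0) : qbinom m r = 0 := if_pos hr

lemma qbinom_natCast (m : ℤ) (r : ℕ) :
    qbinom m r = (∏ i ∈ Finset.range r, qint (m - i)) / qfact r := by
  rw [qbinom, if_neg (by omega), Int.toNat_natCast]

@[simp]
lemma qbinom_zero_right (m : ℤ) : qbinom m 0 = 1 := by
  simpa [qfact] using qbinom_natCast m 0

lemma qbinom_zero_left {r : ℤ} (hr : 0 < r) : qbinom 0 r = 0 := by
  lift r to ℕ using hr.le
  rw [qbinom_natCast, Finset.prod_eq_zero (i := 0) (by simpa using hr) (by simp [qint]), zero_div]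

lemma qbinom_add_one_add_one (m : ℤ) (r : ℕ) :
    qbinom (m + 1) (r + 1) = v ^ ((r : ℤ) + 1) * qbinom m (r + 1) + v ^ (r - m) * qbinom m r := by
  have hlow : ∏ i ∈ Finset.range (r + 1), qint (m + 1 - i)
      = qint (m + 1) * ∏ i ∈ Finset.range r, qint (m - i) := by
    rw [Finset.prod_range_succ', mul_comm]
    push_cast
    simp only [add_sub_add_right_eq_sub, sub_zero]
  have hup : ∏ i ∈ Finset.range (r + 1), qint (m - i)
      = (∏ i ∈ Finset.range r, qint (m - i)) * qint (m - r) := Finset.prod_range_succ ..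
  have hsplit := qint_eq_add (m + 1) (r + 1)
  rw [add_sub_add_right_eq_sub, add_sub_add_right_eq_sub] at hsplit
  have := qint_ne_zero (r := (r : ℤ) + 1) (by omega)
  have := qfact_ne_zero r
  rw [← Nat.cast_add_one, qbinom_natCast, qbinom_natCast, qbinom_natCast, hlow, hup, qfact,
    Finset.prod_range_succ, ← qfact]
  field_simp
  push_cast
  linear_combination (∏ i ∈ Finset.range r, qint (m - i)) * hsplit

lemma qbinom_add_one_left (m r : ℤ) :
    qbinom (m + 1) r = v ^ r * qbinom m r + v ^ (r - m - 1) * qbinom m (r - 1) := by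
  rcases lt_or_ge r 0 with hr | hr
  · simp [qbinom_of_neg _ hr, qbinom_of_neg _ (show r - 1 < 0 by omega)]
  lift r to ℕ using hr
  cases r with
  | zero => simp [qbinom_of_neg m (show (-1 : ℤ) < 0 by omega)]
  | succ s =>
    push_cast
    rw [qbinom_add_one_add_one, add_sub_cancel_right, sub_sub, add_sub_add_right_eq_sub]

lemma eq_of_add_one_add_one_recursion {R : Type*} [Ring R] [IsDomain R] {f g : ℤ → ℕ → R}
    (a : ℕ → R) (b : ℤ → ℕ → R) (ha : ∀ n, a n ≠ 0)
    (hf : ∀ x n, f (x + 1) (n + 1) = a n * f x (n + 1) + b x n * f x n)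
    (hg : ∀ x n, g (x + 1) (n + 1) = a n * g x (n + 1) + b x n * g x n)
    (h_zero_right : ∀ x, f x 0 = g x 0) (h_zero_left : ∀ n, f 0 n = g 0 n) : f = g := by
  funext x n
  induction n generalizing x with
  | zero => exact h_zero_right x
  | succ n ih =>
    induction x using Int.induction_on with
    | zero => exact h_zero_left _
    | succ x hx => rw [hf, hg, hx, ih]
    | pred x hx =>
      have hfx := hf (-x - 1) n
      have hgx := hg (-x - 1) n
      rw [sub_add_cancel, hx] at hfx
      rw [sub_add_cancel, hfx, ih, add_left_inj] at hgx
      exact mul_left_cancel₀ (ha n) hgx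

def qVandermondeSum (x y : ℤ) (n : ℕ) : RatFunc ℚ :=
  ∑ k ∈ Finset.range (n + 1),
    v ^ (x * (k : ℤ) - y * ((n : ℤ) - (k : ℤ))) * qbinom x ((n : ℤ) - (k : ℤ)) * qbinom y (k : ℤ)

lemma qVandermondeSum_zero_right (x y : ℤ) : qVandermondeSum x y 0 = 1 := by
  simp [qVandermondeSum]

lemma qVandermondeSum_zero_left (y : ℤ) (n : ℕ) : qVandermondeSum 0 y n = qbinom y n := by
  rw [qVandermondeSum, Finset.sum_eq_single_of_mem n (by simp)]
  · simp
  · intro k hk hkn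
    rw [qbinom_zero_left (by simp at hk; omega), mul_zero, zero_mul]

lemma qVandermondeSum_add_one_add_one (x y : ℤ) (n : ℕ) :
    qVandermondeSum (x + 1) y (n + 1)
      = v ^ ((n : ℤ) + 1) * qVandermondeSum x y (n + 1) + v ^ (n - x - y) * qVandermondeSum x y n := by
  have hterm (k : ℤ) :
      v ^ ((x + 1) * k - y * (n + 1 - k)) * qbinom (x + 1) (n + 1 - k) * qbinom y k
        = v ^ ((n : ℤ) + 1) * (v ^ (x * k - y * (n + 1 - k)) * qbinom x (n + 1 - k) * qbinom y k)
          + v ^ (n - x - y) * (v ^ (x * k - y * (n - k)) * qbinom x (n - k) * qbinom y k) := by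
    have hexp₁ : v ^ ((x + 1) * k - y * (n + 1 - k)) * v ^ ((n : ℤ) + 1 - k)
        = v ^ ((n : ℤ) + 1) * v ^ (x * k - y * (n + 1 - k)) := by
      simp only [← zpow_add₀ v_ne_zero]; ring_nf
    have hexp₂ : v ^ ((x + 1) * k - y * (n + 1 - k)) * v ^ ((n : ℤ) + 1 - k - x - 1)
        = v ^ (n - x - y) * v ^ (x * k - y * (n - k)) := by
      simp only [← zpow_add₀ v_ne_zero]; ring_nf
    rw [qbinom_add_one_left, show (n : ℤ) + 1 - k - 1 = n - k by ring]
    linear_combination qbinom x (n + 1 - k) * qbinom y k * hexp₁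
      + qbinom x (n - k) * qbinom y k * hexp₂
  rw [qVandermondeSum, qVandermondeSum, qVandermondeSum]
  push_cast
  simp only [hterm, Finset.sum_add_distrib, ← Finset.mul_sum]
  congr 2
  rw [Finset.sum_range_succ, qbinom_of_neg x (by omega), mul_zero, zero_mul, add_zero]

/-- the q-Vandermonde identity
`Σ_{k=0}^{n} v^{xk − y(n−k)} [x choose n−k][y choose k] = [x+y choose n]`. -/
theorem qbinom_vandermonde (x y : ℤ) (n : ℕ) :
    ∑ k ∈ Finset.range (n + 1),
        v ^ (x * (k : ℤ) - y * ((n : ℤ) - (k : ℤ))) * qbinom x ((n : ℤ) - (k : ℤ)) * qbinom y (k : ℤ)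
      = qbinom (x + y) (n : ℤ) := by
  have h := eq_of_add_one_add_one_recursion (f := fun x n ↦ qVandermondeSum x y n)
    (g := fun x n ↦ qbinom (x + y) n) (fun n ↦ v ^ ((n : ℤ) + 1)) (fun x n ↦ v ^ ((n : ℤ) - x - y))
    (fun n ↦ zpow_ne_zero _ v_ne_zero) (qVandermondeSum_add_one_add_one · y)
    (fun x n ↦ by push_cast; rw [add_right_comm, qbinom_add_one_add_one, sub_sub])
    (fun x ↦ by simp [qVandermondeSum_zero_right]) (fun n ↦ by simp [qVandermondeSum_zero_left])
  exact congrFun (congrFun h x) n
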